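/- Let Φ : Matrix (Fin n) (Fin n) ℂ →ₗ[ℂ] Matrix (Fin m) (Fin m) ℂ be a linear map. The following are equivalent: (i) Φ is n-positive, i.e. the extension id_n ⊗ Φ maps positive semidefinite matrices indexed by (Fin n) × (Fin n) to positive semidefinite matrices; (ii) the Choi matrix C_Φ = Σ_{i,j} E_{ij} ⊗ₖ Φ(E_{ij}) is positive semidefinite; (iii) Φ is completely positive, i.e. for every k ≥ 1 the extension id_k ⊗ Φ maps positive semidefinite matrices to positive semidefinite matrices. -/

import Mathlib

open scoped Kronecker ComplexOrder Matrix

noncomputable section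

/-- The block of `M` at position `(a, b)` when `M` is viewed as a block matrix indexed by
`Fin k × Fin n`. -/
def blockAt {k n : ℕ} (M : Matrix (Fin k × Fin n) (Fin k × Fin n) ℂ) (a b : Fin k) :
    Matrix (Fin n) (Fin n) ℂ :=
  Matrix.of fun i j => M (a, i) (b, j)

/-- The extension `id_k ⊗ Φ` of a linear map `Φ` acting blockwise on block matrices. -/
def matExtend {n m : ℕ} (k : ℕ) (Φ : Matrix (Fin n) (Fin n) ℂ →ₗ[ℂ] Matrix (Fin m) (Fin m) ℂ)
    (M : Matrix (Fin k × Fin n) (Fin k × Fin n) ℂ) :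
    Matrix (Fin k × Fin m) (Fin k × Fin m) ℂ :=
  ∑ a : Fin k, ∑ b : Fin k,
    (Matrix.single a b (1 : ℂ)) ⊗ₖ Φ (blockAt M a b)

/-- The Choi matrix of a linear map `Φ`, i.e. `∑ i j, E i j ⊗ₖ Φ (E i j)`. -/
def choiMatrix {n m : ℕ} (Φ : Matrix (Fin n) (Fin n) ℂ →ₗ[ℂ] Matrix (Fin m) (Fin m) ℂ) :
    Matrix (Fin n × Fin m) (Fin n × Fin m) ℂ :=
  ∑ i : Fin n, ∑ j : Fin n,
    (Matrix.single i j (1 : ℂ)) ⊗ₖ Φ (Matrix.single i j (1 : ℂ))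

/-! Entrywise, `(id_k ⊗ Φ)(M) (a, p) (b, q) = ∑ i j, M (a, i) (b, j) * C_Φ (i, p) (j, q)`, so
`(id_k ⊗ Φ)(M) = ∑ i j, Pᵢᴴ (M ⊗ₖ C_Φ) Pⱼ = (∑ i, Pᵢ)ᴴ (M ⊗ₖ C_Φ) (∑ j, Pⱼ)` for suitable
selection matrices `Pᵢ`; it is positive semidefinite as soon as `M` and `C_Φ` are. Conversely,
`C_Φ = (id_n ⊗ Φ)(ω ωᴴ)` for `ω = ∑ i, eᵢ ⊗ eᵢ`, so `n`-positivity already forces `C_Φ ⪰ 0`. -/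

namespace Matrix

theorem PosSemidef.sum_submatrix {ι α β R : Type*} [Fintype ι] [Fintype α] [Fintype β]
    [DecidableEq β] [CommRing R] [PartialOrder R] [StarRing R] [StarOrderedRing R]
    {N : Matrix β β R} (hN : N.PosSemidef) (f : ι → α → β) :
    (∑ i, ∑ j, N.submatrix (f i) (f j)).PosSemidef := by
  let P : ι → Matrix β α R := fun i => (1 : Matrix β β R).submatrix id (f i)
  have hP : ∀ i j, (P i)ᴴ * N * P j = N.submatrix (f i) (f j) := fun i j => by
    ext x y
    simp [P, mul_apply, one_apply]
  have hsum : (∑ i, P i)ᴴ * N * ∑ j, P j = ∑ i, ∑ j, N.submatrix (f i) (f j) := by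
    simp only [conjTranspose_sum, Matrix.sum_mul, Matrix.mul_sum, hP]
    exact Finset.sum_comm
  exact hsum ▸ hN.conjTranspose_mul_mul_same _

end Matrix

theorem LinearMap.apply_matrix_eq_sum_single {ι R M : Type*} [Fintype ι] [DecidableEq ι]
    [CommSemiring R] [AddCommMonoid M] [Module R M]
    (Φ : Matrix ι ι R →ₗ[R] M) (X : Matrix ι ι R) :
    Φ X = ∑ i, ∑ j, X i j • Φ (Matrix.single i j 1) := by
  conv_lhs => rw [X.matrix_eq_sum_single]
  simp [map_sum, ← map_smul, Matrix.smul_single]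

section Choi

variable {n m : ℕ} (Φ : Matrix (Fin n) (Fin n) ℂ →ₗ[ℂ] Matrix (Fin m) (Fin m) ℂ)

theorem choiMatrix_apply (i j : Fin n) (p q : Fin m) :
    choiMatrix Φ (i, p) (j, q) = Φ (Matrix.single i j 1) p q := by
  simp [choiMatrix, Matrix.sum_apply, Matrix.single, ite_and]

theorem matExtend_apply {k : ℕ} (M : Matrix (Fin k × Fin n) (Fin k × Fin n) ℂ) (a b : Fin k)
    (p q : Fin m) : matExtend k Φ M (a, p) (b, q) = Φ (blockAt M a b) p q := by
  simp [matExtend, Matrix.sum_apply, Matrix.single, ite_and]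

theorem matExtend_eq_sum_submatrix_kronecker {k : ℕ}
    (M : Matrix (Fin k × Fin n) (Fin k × Fin n) ℂ) :
    matExtend k Φ M = ∑ i, ∑ j, (M ⊗ₖ choiMatrix Φ).submatrix
      (fun x => ((x.1, i), (i, x.2))) (fun y => ((y.1, j), (j, y.2))) := by
  ext ⟨a, p⟩ ⟨b, q⟩
  rw [matExtend_apply, LinearMap.apply_matrix_eq_sum_single]
  simp [Matrix.sum_apply, choiMatrix_apply, blockAt]

theorem posSemidef_matExtend (hΦ : (choiMatrix Φ).PosSemidef) {k : ℕ}
    {M : Matrix (Fin k × Fin n) (Fin k × Fin n) ℂ} (hM : M.PosSemidef) :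
    (matExtend k Φ M).PosSemidef := by
  rw [matExtend_eq_sum_submatrix_kronecker]
  exact (hM.kronecker hΦ).sum_submatrix _

def maxEntangledVec (n : ℕ) : Fin n × Fin n → ℂ := fun x => if x.1 = x.2 then 1 else 0

theorem blockAt_vecMulVec_maxEntangledVec (a b : Fin n) :
    blockAt (Matrix.vecMulVec (maxEntangledVec n) (star (maxEntangledVec n))) a b =
      Matrix.single a b 1 := by
  ext i j
  simp [blockAt, maxEntangledVec, Matrix.vecMulVec_apply, Matrix.single, ← ite_and, and_comm]

theorem matExtend_vecMulVec_maxEntangledVec :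
    matExtend n Φ (Matrix.vecMulVec (maxEntangledVec n) (star (maxEntangledVec n))) =
      choiMatrix Φ := by
  ext ⟨i, p⟩ ⟨j, q⟩
  rw [matExtend_apply, blockAt_vecMulVec_maxEntangledVec, choiMatrix_apply]

end Choi

/-- **Choi's theorem.** For a linear map `Φ` from `n × n` to `m × m` complex matrices, the
following are equivalent: `Φ` is `n`-positive; the Choi matrix of `Φ` is positive semidefinite;
`Φ` is completely positive. -/
theorem choi_theorem {n m : ℕ}
    (Φ : Matrix (Fin n) (Fin n) ℂ →ₗ[ℂ] Matrix (Fin m) (Fin m) ℂ) :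
    ((∀ M : Matrix (Fin n × Fin n) (Fin n × Fin n) ℂ, M.PosSemidef →
        (matExtend n Φ M).PosSemidef) ↔
      (choiMatrix Φ).PosSemidef) ∧
    ((choiMatrix Φ).PosSemidef ↔
      ∀ k : ℕ, 1 ≤ k → ∀ M : Matrix (Fin k × Fin n) (Fin k × Fin n) ℂ,
        M.PosSemidef → (matExtend k Φ M).PosSemidef) := by
  have posSemidef_choiMatrix_of_nPositive :
      (∀ M : Matrix (Fin n × Fin n) (Fin n × Fin n) ℂ, M.PosSemidef →
        (matExtend n Φ M).PosSemidef) → (choiMatrix Φ).PosSemidef := fun h =>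
    matExtend_vecMulVec_maxEntangledVec Φ ▸ h _ (Matrix.posSemidef_vecMulVec_self_star _)
  refine ⟨⟨posSemidef_choiMatrix_of_nPositive, fun hΦ _ => posSemidef_matExtend Φ hΦ⟩,
    ⟨fun hΦ _ _ _ => posSemidef_matExtend Φ hΦ, fun h => ?_⟩⟩
  rcases n.eq_zero_or_pos with rfl | hn
  · exact Subsingleton.elim 0 (choiMatrix Φ) ▸ Matrix.PosSemidef.zero
  · exact posSemidef_choiMatrix_of_nPositive (h n hn)
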